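/- arXiv:1006.0941 — 5 statements merged into one kernel-verified Lean document; each statement's English description precedes it below -/
import Mathlib

section
/- With hₙ and h_∞ as the elementary earthquake boundary maps (hₙ(x) = e(x−1/n)+1/n for x > 1/n, hₙ(x) = x otherwise; h_∞(x) = ex for x > 0, h_∞(x) = x otherwise) and Qₙ = [∞, −e/n] × [0, e/n], one has L(Qₙ) = log 2 and L(hₙ∘h_∞⁻¹(Qₙ)) = log(e+1) − 1 for every n ≥ 1. -/
/-- Homogeneous coordinates of a boundary point of the upper half-plane. -/
noncomputable def liftB : OnePoint ℝ → ℝ × ℝ := fun p => Option.elim p (1, 0) (fun x => (x, 1))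

noncomputable def det2 (p q : OnePoint ℝ) : ℝ :=
  (liftB p).1 * (liftB q).2 - (liftB q).1 * (liftB p).2

/-- Cross-ratio `(a-c)(b-d)/((a-d)(b-c))` of four boundary points, with the usual
conventions at `∞`. -/
noncomputable def crossRatioB (a b c d : OnePoint ℝ) : ℝ :=
  (det2 a c * det2 b d) / (det2 a d * det2 b c)

/-- Liouville measure of the box of geodesics `[a,b] × [c,d]`. -/
noncomputable def liouvilleB (a b c d : OnePoint ℝ) : ℝ := |Real.log (|crossRatioB a b c d|)|

/-- Boundary map of the elementary earthquake of mass `1` along the geodesic `(c,∞)`. -/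
noncomputable def elemEq (c : ℝ) : OnePoint ℝ → OnePoint ℝ :=
  fun p => Option.elim p OnePoint.infty
    (fun x => ((if c < x then Real.exp 1 * (x - c) + c else x : ℝ) : OnePoint ℝ))

/-- The inverse of the boundary map `h_∞` of the elementary earthquake along `(0,∞)`. -/
noncomputable def elemEqInfInv : OnePoint ℝ → OnePoint ℝ :=
  fun p => Option.elim p OnePoint.infty
    (fun x => ((if 0 < x then x / Real.exp 1 else x : ℝ) : OnePoint ℝ))

/-!
The map `hₙ ∘ h_∞⁻¹` fixes `∞`, `-e/n` and `0` (none of them lies to the right of `0`),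
while `h_∞⁻¹` sends `e/n` to `1/n`, which `hₙ` fixes. With one vertex at `∞` the cross-ratio
of `[∞, -t] × [0, s]` is `(t + s)/t`, which is `2` for `s = t = e/n` and `1 + 1/e` after the
earthquakes, whose logarithm is `log (e + 1) - 1`.
-/

open OnePoint

lemma crossRatioB_infty_left (b c d : ℝ) :
    crossRatioB ∞ (b : OnePoint ℝ) c d = (b - d) / (b - c) := by
  change (1 * 1 - c * 0) * (b * 1 - d * 1) / ((1 * 1 - d * 0) * (b * 1 - c * 1)) = _
  ring

lemma liouvilleB_infty_neg_zero {t s : ℝ} (ht : 0 < t) (hs : 0 ≤ s) :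
    liouvilleB ∞ ((-t : ℝ) : OnePoint ℝ) ((0 : ℝ) : OnePoint ℝ) (s : OnePoint ℝ) =
      Real.log ((t + s) / t) := by
  have hratio : crossRatioB ∞ ((-t : ℝ) : OnePoint ℝ) ((0 : ℝ) : OnePoint ℝ) (s : OnePoint ℝ) =
      (t + s) / t := by
    rw [crossRatioB_infty_left, sub_zero, ← neg_add', neg_div_neg_eq]
  have hge : 1 ≤ (t + s) / t := by rw [le_div_iff₀ ht]; linarith
  rw [liouvilleB, hratio, abs_of_nonneg (zero_le_one.trans hge),
    abs_of_nonneg (Real.log_nonneg hge)]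

lemma elemEq_infty (c : ℝ) : elemEq c ∞ = ∞ := rfl

lemma elemEq_of_le {c x : ℝ} (h : x ≤ c) : elemEq c (x : OnePoint ℝ) = x :=
  congrArg _ (if_neg h.not_gt)

lemma elemEqInfInv_infty : elemEqInfInv ∞ = ∞ := rfl

lemma elemEqInfInv_of_nonpos {x : ℝ} (h : x ≤ 0) : elemEqInfInv (x : OnePoint ℝ) = x :=
  congrArg _ (if_neg h.not_gt)

lemma elemEqInfInv_of_pos {x : ℝ} (h : 0 < x) :
    elemEqInfInv (x : OnePoint ℝ) = ((x / Real.exp 1 : ℝ) : OnePoint ℝ) :=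
  congrArg _ (if_pos h)

/-- For `Qₙ = [∞, -e/n] × [0, e/n]` one has `L(Qₙ) = log 2` and
`L(hₙ∘h_∞⁻¹(Qₙ)) = log (e+1) - 1`, where `hₙ`, `h_∞` are the boundary maps of the
elementary earthquakes along `(1/n, ∞)` and `(0, ∞)`. -/
theorem liouville_distortion_of_elementary_earthquakes (n : ℕ) (hn : 1 ≤ n) :
    liouvilleB OnePoint.infty ((-(Real.exp 1 / n) : ℝ) : OnePoint ℝ)
        ((0 : ℝ) : OnePoint ℝ) ((Real.exp 1 / n : ℝ) : OnePoint ℝ) = Real.log 2 ∧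
      liouvilleB ((elemEq (1 / (n : ℝ)) ∘ elemEqInfInv) OnePoint.infty)
        ((elemEq (1 / (n : ℝ)) ∘ elemEqInfInv) ((-(Real.exp 1 / n) : ℝ) : OnePoint ℝ))
        ((elemEq (1 / (n : ℝ)) ∘ elemEqInfInv) ((0 : ℝ) : OnePoint ℝ))
        ((elemEq (1 / (n : ℝ)) ∘ elemEqInfInv) ((Real.exp 1 / n : ℝ) : OnePoint ℝ)) =
        Real.log (Real.exp 1 + 1) - 1 := by
  have hn_pos : (0 : ℝ) < n := by exact_mod_cast hn
  have he : 0 < Real.exp 1 := Real.exp_pos 1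
  have hen : 0 < Real.exp 1 / n := by positivity
  have hinvn : 0 < 1 / (n : ℝ) := by positivity
  have hen_image : Real.exp 1 / n / Real.exp 1 = 1 / (n : ℝ) := by field_simp
  simp only [Function.comp_apply, elemEqInfInv_infty, elemEq_infty,
    elemEqInfInv_of_nonpos (neg_nonpos.2 hen.le),
    elemEq_of_le ((neg_nonpos.2 hen.le).trans hinvn.le),
    elemEqInfInv_of_nonpos le_rfl, elemEq_of_le hinvn.le,
    elemEqInfInv_of_pos hen, hen_image, elemEq_of_le le_rfl]
  rw [liouvilleB_infty_neg_zero hen hen.le, liouvilleB_infty_neg_zero hen hinvn.le]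
  refine ⟨by rw [← two_mul, mul_div_cancel_right₀ _ hen.ne'], ?_⟩
  rw [show (Real.exp 1 / n + 1 / n) / (Real.exp 1 / n) = (Real.exp 1 + 1) / Real.exp 1 by
    field_simp, Real.log_div (by positivity) he.ne', Real.log_exp]
end

section
/- For every Möbius transformation T of the unit disk, every z ∈ S¹ and every geodesic ℓ not having z as an endpoint, ẽ_{T(z)}(T(ℓ)) · T'(z)^{-1} = ẽ_z(ℓ), where T(ℓ) is the geodesic with endpoints T(a), T(b). -/
/-!
Every Möbius map `w ↦ (A w + B) / (C w + D)` satisfies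
`T x - T y = (A D - B C) (x - y) / ((C x + D) (C y + D))` and `T' z = (A D - B C) / (C z + D)²`,
so in `ẽ_{T z}(T ℓ) · T'(z)⁻¹` every factor `A D - B C` and `C w + D` cancels.
A disk automorphism `u (w + α) / (1 + ᾱ w)` has this form with `A D - B C = u (1 - ᾱ α)`,
and for `|α| < 1` neither this nor the denominators at points of the circle vanish.
-/

/-- The triple `(a, z, b)` of points of the plane is positively (counterclockwise)
oriented. -/
def CCW (a z b : ℂ) : Prop := 0 < ((b - a) * (starRingEnd ℂ) (z - a)).im

section Mobius

variable {𝕜 : Type*} [NontriviallyNormedField 𝕜] (A B C D : 𝕜)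

def mobius (w : 𝕜) : 𝕜 := (A * w + B) / (C * w + D)

variable {A B C D}

theorem mobius_sub_mobius {x y : 𝕜} (hx : C * x + D ≠ 0) (hy : C * y + D ≠ 0) :
    mobius A B C D x - mobius A B C D y =
      (A * D - B * C) * (x - y) / ((C * x + D) * (C * y + D)) := by
  rw [mobius, mobius, div_sub_div _ _ hx hy]
  ring

theorem hasDerivAt_mobius {z : 𝕜} (hz : C * z + D ≠ 0) :
    HasDerivAt (mobius A B C D) ((A * D - B * C) / (C * z + D) ^ 2) z := by
  have hnum : HasDerivAt (fun w => A * w + B) A z := by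
    simpa using ((hasDerivAt_id z).const_mul A).add_const B
  have hden : HasDerivAt (fun w => C * w + D) C z := by
    simpa using ((hasDerivAt_id z).const_mul C).add_const D
  exact (hnum.div hden hz).congr_deriv (by ring)

theorem mobius_eTilde_covariant {z a b : 𝕜} (hdet : A * D - B * C ≠ 0)
    (hz : C * z + D ≠ 0) (ha : C * a + D ≠ 0) (hb : C * b + D ≠ 0) :
    (mobius A B C D z - mobius A B C D a) * (mobius A B C D z - mobius A B C D b) /
        (mobius A B C D a - mobius A B C D b) * (deriv (mobius A B C D) z)⁻¹ =
      (z - a) * (z - b) / (a - b) := by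
  rw [mobius_sub_mobius hz ha, mobius_sub_mobius hz hb, mobius_sub_mobius ha hb,
    (hasDerivAt_mobius hz).deriv]
  field_simp

end Mobius

theorem RCLike.one_add_conj_mul_ne_zero {𝕜 : Type*} [RCLike 𝕜] {α w : 𝕜} (hα : ‖α‖ < 1)
    (hw : ‖w‖ ≤ 1) :
    1 + starRingEnd 𝕜 α * w ≠ 0 := by
  intro h
  have hlt : ‖starRingEnd 𝕜 α * w‖ < 1 := by
    rw [norm_mul, RCLike.norm_conj]
    exact mul_lt_one_of_nonneg_of_lt_one_left (norm_nonneg α) hα hw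
  rw [eq_neg_of_add_eq_zero_right h, norm_neg, norm_one] at hlt
  exact lt_irrefl 1 hlt

theorem eTilde_mobius_covariant_general (u α z a b : ℂ)
    (hu : ‖u‖ = 1) (hα : ‖α‖ < 1)
    (hz : ‖z‖ = 1) (ha : ‖a‖ = 1) (hb : ‖b‖ = 1)
    (T : ℂ → ℂ) (hT : T = fun w => u * (w + α) / (1 + (starRingEnd ℂ) α * w)) :
    (T z - T a) * (T z - T b) / (T a - T b) * (deriv T z)⁻¹ =
      (z - a) * (z - b) / (a - b) := by
  have hT_mobius : T = mobius u (u * α) (starRingEnd ℂ α) 1 := by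
    rw [hT]; funext w; rw [mobius]; congr 1 <;> ring
  have hden {w : ℂ} (hw : ‖w‖ = 1) : starRingEnd ℂ α * w + 1 ≠ 0 := by
    rw [add_comm]; exact RCLike.one_add_conj_mul_ne_zero hα hw.le
  have hdet : u * 1 - u * α * starRingEnd ℂ α ≠ 0 := by
    have hu0 : u ≠ 0 := norm_ne_zero_iff.mp (by rw [hu]; exact one_ne_zero)
    have hα' : 1 + starRingEnd ℂ α * -α ≠ 0 :=
      RCLike.one_add_conj_mul_ne_zero hα (by rw [norm_neg]; exact hα.le)
    convert mul_ne_zero hu0 hα' using 1; ring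
  rw [hT_mobius]
  exact mobius_eTilde_covariant hdet (hden hz) (hden ha) (hden hb)

/-- Möbius covariance of `ẽ_z`: for a Möbius transformation `T` of the unit disk
(`T w = u (w + α)/(1 + ᾱ w)` with `|u| = 1`, `|α| < 1`), a boundary point `z` and a
geodesic `⟨a,b⟩` not ending at `z`, one has `ẽ_{T z}(T ℓ) · (T'(z))⁻¹ = ẽ_z(ℓ)`. -/
theorem eTilde_mobius_covariant (u α z a b : ℂ)
    (hu : ‖u‖ = 1) (hα : ‖α‖ < 1)
    (hz : ‖z‖ = 1) (ha : ‖a‖ = 1) (hb : ‖b‖ = 1)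
    (hab : a ≠ b) (hza : z ≠ a) (hzb : z ≠ b) (hccw : CCW a z b)
    (T : ℂ → ℂ) (hT : T = fun w => u * (w + α) / (1 + (starRingEnd ℂ) α * w)) :
    (T z - T a) * (T z - T b) / (T a - T b) * (deriv T z)⁻¹ =
      (z - a) * (z - b) / (a - b) :=
  eTilde_mobius_covariant_general u α z a b hu hα hz ha hb T hT
end

section
/- For ℓ = ⟨a,b⟩ a geodesic of the unit disk that intersects the closed hyperbolic disk of center 0 and radius D₀, one has 1/|a−b| ≤ 2·cosh(D₀), and hence |ẽ_z(ℓ)| = |(z−a)(z−b)|/|a−b| ≤ 8·cosh(D₀) for every z ∈ S¹. -/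
/-!
A point `w` of the geodesic `⟨a,b⟩` satisfies `|Im (ā b)| (1 + |w|²) ≤ 2 |a - b| |w|`, while on
the unit circle `4 Im (ā b)² = |a - b|² (4 - |a - b|²)`. Together they give
`|a - b| ≥ 2 (1 - |w|²) / (1 + |w|²)`, which is `2 / cosh d(0, w)`; for `|w| ≤ tanh (D₀/2)` this
is at least `2 / cosh D₀`.
-/

/-- The hyperbolic geodesic of the unit disk with ideal endpoints `a, b` on the unit
circle: the circular arc (or diameter) through `a` and `b` orthogonal to the unit
circle. -/
def geoDisk (a b : ℂ) : Set ℂ :=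
  {w | ‖w‖ < 1 ∧
    ((starRingEnd ℂ) a * b).im * (‖w‖ ^ 2 + 1) =
      -2 * (((starRingEnd ℂ) b - (starRingEnd ℂ) a) * w).im}

open ComplexConjugate Real

theorem Complex.four_mul_im_conj_mul_sq {a b : ℂ} (ha : ‖a‖ = 1) (hb : ‖b‖ = 1) :
    4 * (conj a * b).im ^ 2 = ‖a - b‖ ^ 2 * (4 - ‖a - b‖ ^ 2) := by
  have hchord : ‖a - b‖ ^ 2 = 2 - 2 * (conj a * b).re := by
    rw [norm_sub_sq_real, Complex.inner, ha, hb, mul_comm b]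
    ring
  have hunit : (conj a * b).re ^ 2 + (conj a * b).im ^ 2 = 1 := by
    have h : ‖conj a * b‖ ^ 2 = 1 := by simp [ha, hb]
    rw [Complex.sq_norm, Complex.normSq_apply] at h
    linarith
  rw [hchord]
  linear_combination 4 * hunit

theorem abs_im_conj_mul_mul_le_of_mem_geoDisk {a b w : ℂ} (hw : w ∈ geoDisk a b) :
    |(conj a * b).im| * (1 + ‖w‖ ^ 2) ≤ 2 * (‖a - b‖ * ‖w‖) := by
  have hv : |((conj b - conj a) * w).im| ≤ ‖a - b‖ * ‖w‖ := by
    calc |((conj b - conj a) * w).im| ≤ ‖(conj b - conj a) * w‖ := Complex.abs_im_le_norm _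
      _ = ‖a - b‖ * ‖w‖ := by rw [← map_sub, norm_mul, Complex.norm_conj, norm_sub_rev]
  calc |(conj a * b).im| * (1 + ‖w‖ ^ 2) = |(conj a * b).im * (‖w‖ ^ 2 + 1)| := by
        rw [abs_mul, abs_of_pos (by positivity : (0 : ℝ) < ‖w‖ ^ 2 + 1), add_comm]
    _ = 2 * |((conj b - conj a) * w).im| := by rw [hw.2, abs_mul]; norm_num
    _ ≤ 2 * (‖a - b‖ * ‖w‖) := by gcongr

theorem two_mul_one_sub_sq_le_of_mem_geoDisk {a b w : ℂ} (ha : ‖a‖ = 1) (hb : ‖b‖ = 1)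
    (hab : a ≠ b) (hw : w ∈ geoDisk a b) :
    2 * (1 - ‖w‖ ^ 2) ≤ ‖a - b‖ * (1 + ‖w‖ ^ 2) := by
  set s := ‖a - b‖
  set t := ‖w‖
  have hs : 0 < s := norm_pos_iff.mpr (sub_ne_zero.mpr hab)
  have hI := abs_im_conj_mul_mul_le_of_mem_geoDisk hw
  have hsq : s ^ 2 * ((4 - s ^ 2) * (1 + t ^ 2) ^ 2) ≤ s ^ 2 * (16 * t ^ 2) := by
    calc s ^ 2 * ((4 - s ^ 2) * (1 + t ^ 2) ^ 2) = (|(conj a * b).im| * (1 + t ^ 2)) ^ 2 * 4 := by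
          rw [mul_pow, sq_abs, ← mul_assoc, ← Complex.four_mul_im_conj_mul_sq ha hb]; ring
      _ ≤ (2 * (s * t)) ^ 2 * 4 := by gcongr
      _ = s ^ 2 * (16 * t ^ 2) := by ring
  have h16 : (4 - s ^ 2) * (1 + t ^ 2) ^ 2 ≤ 16 * t ^ 2 :=
    le_of_mul_le_mul_left hsq (by positivity)
  refine (abs_le_of_sq_le_sq ?_ (by positivity)).trans' (le_abs_self _)
  linear_combination h16

theorem Real.inv_cosh_eq_one_sub_tanh_half_sq_div (x : ℝ) :
    (cosh x)⁻¹ = (1 - tanh (x / 2) ^ 2) / (1 + tanh (x / 2) ^ 2) := by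
  have hc := cosh_pos (x / 2)
  have hx : x = 2 * (x / 2) := by ring
  rw [tanh_eq_sinh_div_cosh, hx, cosh_two_mul, ← hx]
  field_simp
  linear_combination -cosh_sq (x / 2)

theorem two_div_cosh_le_norm_sub_of_mem_geoDisk {a b w : ℂ} {D : ℝ} (ha : ‖a‖ = 1)
    (hb : ‖b‖ = 1) (hab : a ≠ b) (hw : w ∈ geoDisk a b) (hwD : ‖w‖ ≤ tanh (D / 2)) :
    2 / cosh D ≤ ‖a - b‖ := by
  set t := ‖w‖
  set τ := tanh (D / 2)
  have ht : 0 ≤ t := norm_nonneg w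
  have htτ : t ^ 2 ≤ τ ^ 2 := pow_le_pow_left₀ ht hwD 2
  calc 2 / cosh D = 2 * (1 - τ ^ 2) / (1 + τ ^ 2) := by
        rw [div_eq_mul_inv, Real.inv_cosh_eq_one_sub_tanh_half_sq_div, mul_div_assoc]
    _ ≤ 2 * (1 - t ^ 2) / (1 + t ^ 2) := by
        rw [div_le_div_iff₀ (by positivity) (by positivity)]
        nlinarith
    _ ≤ ‖a - b‖ := by
        rw [div_le_iff₀ (by positivity)]
        exact two_mul_one_sub_sq_le_of_mem_geoDisk ha hb hab hw

theorem eTilde_bound_on_compact_part_general (D₀ : ℝ) (a b : ℂ)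
    (ha : ‖a‖ = 1) (hb : ‖b‖ = 1) (hab : a ≠ b)
    (hmeet : ∃ w ∈ geoDisk a b, ‖w‖ ≤ Real.tanh (D₀ / 2)) :
    1 / ‖a - b‖ ≤ 2 * Real.cosh D₀ ∧
      ∀ z : ℂ, ‖z‖ = 1 → ‖(z - a) * (z - b) / (a - b)‖ ≤ 8 * Real.cosh D₀ := by
  obtain ⟨w, hw, hwD⟩ := hmeet
  have hs : 0 < ‖a - b‖ := norm_pos_iff.mpr (sub_ne_zero.mpr hab)
  have hc := Real.cosh_pos D₀
  have hchord : 1 / ‖a - b‖ ≤ 2 * Real.cosh D₀ := by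
    have hlower := two_div_cosh_le_norm_sub_of_mem_geoDisk ha hb hab hw hwD
    rw [div_le_iff₀ hc] at hlower
    rw [div_le_iff₀ hs]
    nlinarith
  refine ⟨hchord, fun z hz => ?_⟩
  have hza : ‖z - a‖ ≤ 2 := (norm_sub_le z a).trans (by rw [hz, ha]; norm_num)
  have hzb : ‖z - b‖ ≤ 2 := (norm_sub_le z b).trans (by rw [hz, hb]; norm_num)
  calc ‖(z - a) * (z - b) / (a - b)‖ = ‖z - a‖ * ‖z - b‖ * (1 / ‖a - b‖) := by
        rw [norm_div, norm_mul, mul_one_div]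
    _ ≤ 2 * 2 * (2 * Real.cosh D₀) := by gcongr
    _ = 8 * Real.cosh D₀ := by ring

/-- If the geodesic `⟨a,b⟩` intersects the closed hyperbolic disk of center `0` and
radius `D₀` (Euclidean radius `tanh (D₀/2)`), then `1/|a-b| ≤ 2 cosh D₀`, hence
`|ẽ_z(⟨a,b⟩)| = |(z-a)(z-b)/(a-b)| ≤ 8 cosh D₀` for every `z` on the unit circle. -/
theorem eTilde_bound_on_compact_part (D₀ : ℝ) (hD₀ : 0 ≤ D₀) (a b : ℂ)
    (ha : ‖a‖ = 1) (hb : ‖b‖ = 1) (hab : a ≠ b)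
    (hmeet : ∃ w ∈ geoDisk a b, ‖w‖ ≤ Real.tanh (D₀ / 2)) :
    1 / ‖a - b‖ ≤ 2 * Real.cosh D₀ ∧
      ∀ z : ℂ, ‖z‖ = 1 → ‖(z - a) * (z - b) / (a - b)‖ ≤ 8 * Real.cosh D₀ :=
  eTilde_bound_on_compact_part_general D₀ a b ha hb hab hmeet
end

section
/- Fix D₀ ≥ 0 and z ∈ S¹, and let w_d = (tanh(d/2))·z be the point at hyperbolic distance d from 0 on the radius to z. If a geodesic ℓ intersects the hyperbolic D₀-neighborhood of w_d, then |ẽ_z(ℓ)| ≤ 8·cosh(D₀)·e^{−d}. -/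
/-- The hyperbolic (Poincaré) distance between two points of the unit disk. -/
noncomputable def hypDist (u v : ℂ) : ℝ :=
  Real.log ((1 + ‖(u - v) / (1 - (starRingEnd ℂ) v * u)‖) /
    (1 - ‖(u - v) / (1 - (starRingEnd ℂ) v * u)‖))

/-!
For a point `w` on the geodesic `⟨a, b⟩`, the Möbius map `φ_w(u) = (u - w) / (1 - w̄ u)`
sends `⟨a, b⟩` to a diameter, on which `|ẽ| ≤ 1`; Möbius covariance of `ẽ` then gives
`|ẽ_z(⟨a, b⟩)| ≤ |z - w|² / (1 - |w|²) = 1 / P(w, z)`, with `P` the Poisson kernel.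
Harnack's inequality `P(w, z) ≥ e^{-ρ(w, v)} P(v, z)` moves the base point to `v = w_d`,
where `1 / P(w_d, z) = (1 - tanh (d/2)) / (1 + tanh (d/2)) = e^{-d}`.
Finally `ρ(w, w_d) ≤ D₀` and `e^{D₀} ≤ 2 cosh D₀`.
-/

open ComplexConjugate

lemma conj_mul_self_of_norm_eq_one {u : ℂ} (hu : ‖u‖ = 1) : conj u * u = 1 := by
  rw [Complex.conj_mul', hu]
  norm_num

lemma norm_one_sub_conj_mul_of_norm_eq_one (w : ℂ) {u : ℂ} (hu : ‖u‖ = 1) :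
    ‖1 - conj w * u‖ = ‖u - w‖ := by
  have h : 1 - conj w * u = conj (u - w) * u := by
    rw [map_sub, sub_mul, conj_mul_self_of_norm_eq_one hu]
  rw [h, norm_mul, Complex.norm_conj, hu, mul_one]

lemma norm_one_sub_conj_mul_self {w : ℂ} (hw : ‖w‖ ≤ 1) :
    ‖1 - conj w * w‖ = 1 - ‖w‖ ^ 2 := by
  rw [Complex.conj_mul', ← Complex.ofReal_pow, ← Complex.ofReal_one, ← Complex.ofReal_sub,
    Complex.norm_real, Real.norm_of_nonneg]
  nlinarith [norm_nonneg w]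

lemma norm_one_sub_conj_mul_sq_sub_norm_sub_sq (w v : ℂ) :
    ‖1 - conj v * w‖ ^ 2 - ‖w - v‖ ^ 2 = (1 - ‖w‖ ^ 2) * (1 - ‖v‖ ^ 2) := by
  simp only [Complex.sq_norm, Complex.normSq_apply, Complex.sub_re, Complex.sub_im,
    Complex.mul_re, Complex.mul_im, Complex.one_re, Complex.one_im, Complex.conj_re,
    Complex.conj_im]
  ring

/-- `φ_w(a) + φ_w(b) = 0` with denominators cleared. -/
lemma moebius_antipodal_of_mem_geoDisk {a b w : ℂ} (ha : ‖a‖ = 1) (hb : ‖b‖ = 1)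
    (hab : a ≠ b) (hw : w ∈ geoDisk a b) :
    (a - w) * (1 - conj w * b) + (b - w) * (1 - conj w * a) = 0 := by
  set E := (a - w) * (1 - conj w * b) + (b - w) * (1 - conj w * a) with hE
  have hsymm : conj a * E = b * conj E := by
    simp only [hE, map_add, map_mul, map_sub, map_one, Complex.conj_conj]
    linear_combination (1 + w * conj w - 2 * conj w * b) * conj_mul_self_of_norm_eq_one ha -
      (1 + w * conj w - 2 * w * conj a) * conj_mul_self_of_norm_eq_one hb
  have hreal : conj (conj a * E) = conj a * E := by
    have ha' : a.re ^ 2 + a.im ^ 2 = 1 := by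
      have h := Complex.sq_norm a
      rw [ha, Complex.normSq_apply] at h
      linear_combination -h
    have hgeo := hw.2
    rw [Complex.sq_norm, Complex.normSq_apply] at hgeo
    rw [Complex.conj_eq_iff_im]
    simp only [hE, Complex.mul_im, Complex.mul_re, Complex.sub_re, Complex.sub_im,
      Complex.add_re, Complex.add_im, Complex.one_re, Complex.one_im,
      Complex.conj_re, Complex.conj_im] at hgeo ⊢
    linear_combination hgeo + (2 * (b.re * w.im - b.im * w.re)) * ha'
  rw [map_mul, Complex.conj_conj] at hreal
  have h : (b - a) * conj E = 0 := by linear_combination -hsymm - hreal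
  simpa using (mul_eq_zero.mp h).resolve_left (sub_ne_zero.mpr hab.symm)

lemma norm_sub_mul_one_sub_norm_sq {a b w : ℂ} (hb : ‖b‖ = 1) (hw : ‖w‖ ≤ 1)
    (hE : (a - w) * (1 - conj w * b) + (b - w) * (1 - conj w * a) = 0) :
    ‖a - b‖ * (1 - ‖w‖ ^ 2) = 2 * (‖a - w‖ * ‖b - w‖) := by
  have h : (a - b) * (1 - conj w * w) = 2 * ((a - w) * (1 - conj w * b)) := by
    linear_combination -hE
  have := congrArg norm h
  rwa [norm_mul, norm_one_sub_conj_mul_self hw, norm_mul, norm_mul,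
    norm_one_sub_conj_mul_of_norm_eq_one w hb, Complex.norm_two] at this

lemma norm_sub_mul_norm_sub_mul_le {z a b w : ℂ} (hz : ‖z‖ = 1) (ha : ‖a‖ = 1)
    (hb : ‖b‖ = 1) (hw : ‖w‖ ≤ 1)
    (hE : (a - w) * (1 - conj w * b) + (b - w) * (1 - conj w * a) = 0) :
    ‖z - a‖ * ‖z - b‖ * (1 - ‖w‖ ^ 2) ^ 2 ≤ 2 * (‖z - w‖ ^ 2 * (‖a - w‖ * ‖b - w‖)) := by
  -- Möbius covariance `ẽ_z(a, b) = φ_w'(z)⁻¹ ẽ_{φ_w z}(φ_w a, φ_w b)`, denominators cleared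
  have h : (z - a) * (z - b) * (1 - conj w * w) ^ 2 =
      (z - w) ^ 2 * (1 - conj w * a) * (1 - conj w * b) +
        (a - w) * (b - w) * (1 - conj w * z) ^ 2 := by
    linear_combination (-(z - w) * (1 - conj w * z)) * hE
  calc ‖z - a‖ * ‖z - b‖ * (1 - ‖w‖ ^ 2) ^ 2
      = ‖(z - a) * (z - b) * (1 - conj w * w) ^ 2‖ := by
        rw [norm_mul, norm_mul, norm_pow, norm_one_sub_conj_mul_self hw]
    _ ≤ ‖(z - w) ^ 2 * (1 - conj w * a) * (1 - conj w * b)‖ +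
        ‖(a - w) * (b - w) * (1 - conj w * z) ^ 2‖ := h ▸ norm_add_le _ _
    _ = 2 * (‖z - w‖ ^ 2 * (‖a - w‖ * ‖b - w‖)) := by
        simp only [norm_mul, norm_pow, norm_one_sub_conj_mul_of_norm_eq_one w ha,
          norm_one_sub_conj_mul_of_norm_eq_one w hb, norm_one_sub_conj_mul_of_norm_eq_one w hz]
        ring

lemma norm_eTilde_le_of_mem_geoDisk {z a b w : ℂ} (hz : ‖z‖ = 1) (ha : ‖a‖ = 1)
    (hb : ‖b‖ = 1) (hab : a ≠ b) (hw : w ∈ geoDisk a b) :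
    ‖(z - a) * (z - b) / (a - b)‖ ≤ ‖z - w‖ ^ 2 / (1 - ‖w‖ ^ 2) := by
  have hE := moebius_antipodal_of_mem_geoDisk ha hb hab hw
  have hw1 : 0 < 1 - ‖w‖ ^ 2 := by nlinarith [norm_nonneg w, hw.1]
  have hab' : 0 < ‖a - b‖ := norm_pos_iff.mpr (sub_ne_zero.mpr hab)
  rw [norm_div, norm_mul, div_le_div_iff₀ hab' hw1]
  refine le_of_mul_le_mul_right ?_ hw1
  calc ‖z - a‖ * ‖z - b‖ * (1 - ‖w‖ ^ 2) * (1 - ‖w‖ ^ 2)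
      = ‖z - a‖ * ‖z - b‖ * (1 - ‖w‖ ^ 2) ^ 2 := by ring
    _ ≤ 2 * (‖z - w‖ ^ 2 * (‖a - w‖ * ‖b - w‖)) :=
        norm_sub_mul_norm_sub_mul_le hz ha hb hw.1.le hE
    _ = ‖z - w‖ ^ 2 * (‖a - b‖ * (1 - ‖w‖ ^ 2)) := by
        rw [norm_sub_mul_one_sub_norm_sq hb hw.1.le hE]; ring
    _ = ‖z - w‖ ^ 2 * ‖a - b‖ * (1 - ‖w‖ ^ 2) := by ring

lemma exp_hypDist_mul {w v : ℂ} (hw : ‖w‖ < 1) (hv : ‖v‖ < 1) :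
    Real.exp (hypDist w v) * ((1 - ‖w‖ ^ 2) * (1 - ‖v‖ ^ 2)) =
      (‖1 - conj v * w‖ + ‖w - v‖) ^ 2 := by
  have hpos : 0 < (1 - ‖w‖ ^ 2) * (1 - ‖v‖ ^ 2) := by
    apply mul_pos <;> nlinarith [norm_nonneg w, norm_nonneg v]
  rw [← norm_one_sub_conj_mul_sq_sub_norm_sub_sq] at hpos ⊢
  rw [hypDist, norm_div]
  set D := ‖1 - conj v * w‖
  set q := ‖w - v‖
  have hlt : q < D := by nlinarith [norm_nonneg (w - v), norm_nonneg (1 - conj v * w)]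
  have hD : 0 < D := (norm_nonneg _).trans_lt hlt
  have hratio : (1 + q / D) / (1 - q / D) = (D + q) / (D - q) := by
    rw [one_add_div hD.ne', one_sub_div hD.ne', div_div_div_cancel_right₀ hD.ne']
  rw [hratio, Real.exp_log (div_pos (by positivity) (by linarith)), div_mul_eq_mul_div,
    div_eq_iff (by linarith)]
  ring

lemma norm_sub_sq_div_le_exp_hypDist_mul {z w v : ℂ} (hz : ‖z‖ = 1) (hw : ‖w‖ < 1)
    (hv : ‖v‖ < 1) :
    ‖z - w‖ ^ 2 / (1 - ‖w‖ ^ 2) ≤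
      Real.exp (hypDist w v) * (‖z - v‖ ^ 2 / (1 - ‖v‖ ^ 2)) := by
  have hw1 : 0 < 1 - ‖w‖ ^ 2 := by nlinarith [norm_nonneg w]
  have hv1 : 0 < 1 - ‖v‖ ^ 2 := by nlinarith [norm_nonneg v]
  have htriangle :
      ‖z - w‖ * (1 - ‖v‖ ^ 2) ≤ ‖z - v‖ * (‖1 - conj v * w‖ + ‖w - v‖) := by
    have h : (z - w) * (1 - conj v * v) =
        (z - v) * (1 - conj v * w) - (w - v) * (1 - conj v * z) := by
      ring
    calc ‖z - w‖ * (1 - ‖v‖ ^ 2)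
        = ‖(z - v) * (1 - conj v * w) - (w - v) * (1 - conj v * z)‖ := by
          rw [← h, norm_mul, norm_one_sub_conj_mul_self hv.le]
      _ ≤ ‖(z - v) * (1 - conj v * w)‖ + ‖(w - v) * (1 - conj v * z)‖ := norm_sub_le _ _
      _ = ‖z - v‖ * (‖1 - conj v * w‖ + ‖w - v‖) := by
          rw [norm_mul, norm_mul, norm_one_sub_conj_mul_of_norm_eq_one v hz]; ring
  rw [mul_div_assoc', div_le_div_iff₀ hw1 hv1]
  refine le_of_mul_le_mul_right ?_ hv1
  calc ‖z - w‖ ^ 2 * (1 - ‖v‖ ^ 2) * (1 - ‖v‖ ^ 2)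
      = (‖z - w‖ * (1 - ‖v‖ ^ 2)) ^ 2 := by ring
    _ ≤ ‖z - v‖ ^ 2 * (‖1 - conj v * w‖ + ‖w - v‖) ^ 2 := by
        rw [← mul_pow]
        exact pow_le_pow_left₀ (by positivity) htriangle 2
    _ = Real.exp (hypDist w v) * ‖z - v‖ ^ 2 * (1 - ‖w‖ ^ 2) * (1 - ‖v‖ ^ 2) := by
        rw [← exp_hypDist_mul hw hv]; ring

lemma Real.one_sub_tanh_half_div_one_add (x : ℝ) :
    (1 - Real.tanh (x / 2)) / (1 + Real.tanh (x / 2)) = Real.exp (-x) := by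
  have hc := (Real.cosh_pos (x / 2)).ne'
  rw [Real.tanh_eq_sinh_div_cosh, one_sub_div hc, one_add_div hc, div_div_div_cancel_right₀ hc,
    Real.cosh_sub_sinh, Real.cosh_add_sinh, ← Real.exp_sub]
  ring_nf

lemma norm_sub_sq_div_tanh_half {z : ℂ} (hz : ‖z‖ = 1) (d : ℝ) :
    ‖z - (Real.tanh (d / 2) : ℂ) * z‖ ^ 2 / (1 - ‖(Real.tanh (d / 2) : ℂ) * z‖ ^ 2) =
      Real.exp (-d) := by
  rw [← Real.one_sub_tanh_half_div_one_add d]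
  set s := Real.tanh (d / 2)
  have hs : 0 < 1 - s := by linarith [Real.tanh_lt_one (d / 2)]
  have hs' : 0 < 1 + s := by linarith [Real.neg_one_lt_tanh (d / 2)]
  have h : z - (s : ℂ) * z = ((1 - s : ℝ) : ℂ) * z := by push_cast; ring
  rw [h, norm_mul, norm_mul, Complex.norm_real, Complex.norm_real, hz, mul_one, mul_one,
    Real.norm_of_nonneg hs.le, Real.norm_eq_abs, sq_abs,
    div_eq_div_iff (by nlinarith) hs'.ne']
  ring

lemma Real.exp_le_two_mul_cosh (x : ℝ) : Real.exp x ≤ 2 * Real.cosh x := by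
  rw [← Real.cosh_add_sinh]
  linarith [Real.sinh_lt_cosh x]

theorem eTilde_decay_general (D₀ d : ℝ)
    (z a b : ℂ) (hz : ‖z‖ = 1) (ha : ‖a‖ = 1) (hb : ‖b‖ = 1) (hab : a ≠ b)
    (hmeet : ∃ w ∈ geoDisk a b, hypDist w ((Real.tanh (d / 2) : ℂ) * z) ≤ D₀) :
    ‖(z - a) * (z - b) / (a - b)‖ ≤ 8 * Real.cosh D₀ * Real.exp (-d) := by
  obtain ⟨w, hw, hdist⟩ := hmeet
  set v : ℂ := (Real.tanh (d / 2) : ℂ) * z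
  have hv : ‖v‖ < 1 := by
    rw [norm_mul, Complex.norm_real, hz, mul_one, Real.norm_eq_abs]
    exact Real.abs_tanh_lt_one _
  calc ‖(z - a) * (z - b) / (a - b)‖ ≤ ‖z - w‖ ^ 2 / (1 - ‖w‖ ^ 2) :=
        norm_eTilde_le_of_mem_geoDisk hz ha hb hab hw
    _ ≤ Real.exp (hypDist w v) * (‖z - v‖ ^ 2 / (1 - ‖v‖ ^ 2)) :=
        norm_sub_sq_div_le_exp_hypDist_mul hz hw.1 hv
    _ = Real.exp (hypDist w v) * Real.exp (-d) := by rw [norm_sub_sq_div_tanh_half hz]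
    _ ≤ 2 * Real.cosh D₀ * Real.exp (-d) := by
        gcongr
        exact (Real.exp_le_exp.mpr hdist).trans (Real.exp_le_two_mul_cosh D₀)
    _ ≤ 8 * Real.cosh D₀ * Real.exp (-d) := by
        gcongr
        norm_num

/-- Decay of `ẽ_z`: if a geodesic `⟨a,b⟩` meets the hyperbolic `D₀`-neighborhood of the
point `w_d = tanh(d/2)·z` at hyperbolic distance `d` from `0` on the radius to `z`,
then `|ẽ_z(⟨a,b⟩)| ≤ 8 cosh(D₀) e^{-d}`. -/
theorem eTilde_decay (D₀ d : ℝ) (hD₀ : 0 ≤ D₀) (hd : 0 ≤ d)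
    (z a b : ℂ) (hz : ‖z‖ = 1) (ha : ‖a‖ = 1) (hb : ‖b‖ = 1) (hab : a ≠ b)
    (hmeet : ∃ w ∈ geoDisk a b, hypDist w ((Real.tanh (d / 2) : ℂ) * z) ≤ D₀) :
    ‖(z - a) * (z - b) / (a - b)‖ ≤ 8 * Real.cosh D₀ * Real.exp (-d) :=
  eTilde_decay_general D₀ d z a b hz ha hb hab hmeet
end

section
/- For a bounded measured lamination λ on the unit disk and any z ∈ S¹ not in the closure of the fixed base stratum, the integral ∫_G ẽ_z(ℓ) dλ_{A,z}(ℓ) converges absolutely, where λ_{A,z} is the restriction of λ to the geodesics separating the base stratum A from z; in particular the infinitesimal earthquake Ė^λ(z) = ∫_G Ė^λ_ℓ(z) dλ(ℓ) is well-defined. -/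
open Set MeasureTheory

/-- The space of geodesics of the unit disk, identified with pairs of points of the
unit circle (the ideal endpoints). -/
def GeodD := {p : ℂ × ℂ // ‖p.1‖ = 1 ∧ ‖p.2‖ = 1}

noncomputable instance : MeasurableSpace GeodD := by unfold GeodD; infer_instance

/-- The set of geodesics crossing (intersecting) a subset `A` of the disk. -/
def crossD (A : Set ℂ) : Set GeodD := {g | (geoDisk g.1.1 g.1.2 ∩ A).Nonempty}

/-- A geodesic arc of unit hyperbolic length in the disk. -/
def IsUnitArcD (A : Set ℂ) : Prop :=
  ∃ g : ℝ → ℂ, (∀ s ∈ Icc (0:ℝ) 1, ‖g s‖ < 1) ∧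
    (∀ s ∈ Icc (0:ℝ) 1, ∀ t ∈ Icc (0:ℝ) 1, hypDist (g s) (g t) = |s - t|) ∧
    A = g '' Icc 0 1

/-- Masses of unit arcs; the Thurston norm is the supremum of this set. -/
def thSetD (μ : Measure GeodD) : Set ℝ :=
  {r | ∃ A, IsUnitArcD A ∧ r = (μ (crossD A)).toReal}

/-- A measured lamination: supported on a set of pairwise disjoint geodesics. -/
def IsLamD (μ : Measure GeodD) : Prop :=
  ∃ S : Set GeodD, μ Sᶜ = 0 ∧ (∀ g ∈ S, g.1.1 ≠ g.1.2) ∧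
    (∀ g ∈ S, ∀ g' ∈ S,
      geoDisk g.1.1 g.1.2 = geoDisk g'.1.1 g'.1.2 ∨
        Disjoint (geoDisk g.1.1 g.1.2) (geoDisk g'.1.1 g'.1.2))

/-- Boundedness of a measured lamination (finite Thurston norm). -/
def IsBoundedLamD (μ : Measure GeodD) : Prop :=
  IsLamD μ ∧ BddAbove (thSetD μ) ∧ ∀ A, IsUnitArcD A → μ (crossD A) ≠ ⊤

/-- `|ẽ_z|` as a function on the space of geodesics. -/
noncomputable def eAbs (z : ℂ) (g : GeodD) : ℝ :=
  ‖(z - g.1.1) * (z - g.1.2) / (g.1.1 - g.1.2)‖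


/-!
Cut the geodesic ray `f` into the unit arcs `f '' [n, n + 1]`. A leaf crossing the `n`-th arc at
`w = f s` has `|ẽ_z| ≤ |z - w|² / (1 - |w|) + 2 |z - w| + (1 - |w|²)`, because `w` lies on the
circle through its endpoints `a, b` orthogonal to `S¹`, where
`2 |w - a| |w - b| = (1 - |w|²) |a - b|`.
Along a unit-speed ray, `|z - f s|`, `1 - |f s|` and `1 - |f s|²` are all comparable to `e^{-s}`
(compare the hyperbolic and the pseudo-hyperbolic distance), so the `n`-th arc contributes at
most `K e^{-n}` times its `λ`-mass, which the Thurston norm bounds uniformly in `n`.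
-/

open ComplexConjugate Real

noncomputable def pseudoDist (u v : ℂ) : ℝ := ‖(u - v) / (1 - conj v * u)‖

section PseudoDist

variable {u v : ℂ}

theorem norm_one_sub_conj_mul_sq (u v : ℂ) :
    ‖1 - conj v * u‖ ^ 2 = ‖u - v‖ ^ 2 + (1 - ‖u‖ ^ 2) * (1 - ‖v‖ ^ 2) := by
  simp only [Complex.sq_norm, Complex.normSq_apply, Complex.sub_re, Complex.sub_im,
    Complex.mul_re, Complex.mul_im, Complex.one_re, Complex.one_im, Complex.conj_re,
    Complex.conj_im]
  ring

theorem one_sub_norm_le_norm_one_sub_conj_mul (hu : ‖u‖ ≤ 1) :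
    1 - ‖v‖ ≤ ‖1 - conj v * u‖ := by
  have h := norm_sub_norm_le (1 : ℂ) (conj v * u)
  rw [norm_one, norm_mul, Complex.norm_conj] at h
  nlinarith [norm_nonneg v]

theorem norm_one_sub_conj_mul_le_two (hu : ‖u‖ ≤ 1) (hv : ‖v‖ ≤ 1) :
    ‖1 - conj v * u‖ ≤ 2 := by
  have h := norm_sub_le (1 : ℂ) (conj v * u)
  rw [norm_one, norm_mul, Complex.norm_conj] at h
  nlinarith [norm_nonneg u]

theorem norm_sub_lt_norm_one_sub_conj_mul (hu : ‖u‖ < 1) (hv : ‖v‖ < 1) :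
    ‖u - v‖ < ‖1 - conj v * u‖ := by
  have hpos : 0 < (1 - ‖u‖ ^ 2) * (1 - ‖v‖ ^ 2) := by
    apply mul_pos <;> nlinarith [norm_nonneg u, norm_nonneg v]
  have := norm_one_sub_conj_mul_sq u v
  nlinarith [norm_nonneg (u - v), norm_nonneg (1 - conj v * u)]

theorem pseudoDist_nonneg (u v : ℂ) : 0 ≤ pseudoDist u v := norm_nonneg _

theorem norm_sub_eq_pseudoDist_mul (hu : ‖u‖ < 1) (hv : ‖v‖ < 1) :
    ‖u - v‖ = pseudoDist u v * ‖1 - conj v * u‖ := by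
  have hD := (norm_nonneg _).trans_lt (norm_sub_lt_norm_one_sub_conj_mul hu hv)
  rw [pseudoDist, norm_div, div_mul_cancel₀ _ hD.ne']

theorem pseudoDist_lt_one (hu : ‖u‖ < 1) (hv : ‖v‖ < 1) : pseudoDist u v < 1 := by
  have hD := (norm_nonneg _).trans_lt (norm_sub_lt_norm_one_sub_conj_mul hu hv)
  rw [pseudoDist, norm_div, div_lt_one hD]
  exact norm_sub_lt_norm_one_sub_conj_mul hu hv

theorem norm_one_sub_conj_mul_sq_mul (hu : ‖u‖ < 1) (hv : ‖v‖ < 1) :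
    ‖1 - conj v * u‖ ^ 2 * (1 - pseudoDist u v ^ 2) = (1 - ‖u‖ ^ 2) * (1 - ‖v‖ ^ 2) := by
  linear_combination norm_one_sub_conj_mul_sq u v +
    (‖u - v‖ + pseudoDist u v * ‖1 - conj v * u‖) * norm_sub_eq_pseudoDist_mul hu hv

theorem exp_hypDist_mul_s18 (hu : ‖u‖ < 1) (hv : ‖v‖ < 1) :
    exp (hypDist u v) * (1 - pseudoDist u v) = 1 + pseudoDist u v := by
  have hρ := pseudoDist_lt_one hu hv
  rw [hypDist, ← pseudoDist,
    exp_log (div_pos (by linarith [pseudoDist_nonneg u v]) (by linarith)),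
    div_mul_cancel₀ _ (by linarith)]

theorem exp_neg_hypDist_le_one_sub_pseudoDist (hu : ‖u‖ < 1) (hv : ‖v‖ < 1) :
    exp (-hypDist u v) ≤ 1 - pseudoDist u v := by
  have h := exp_hypDist_mul_s18 hu hv
  rw [exp_neg, inv_le_iff_one_le_mul₀ (exp_pos _)]
  linarith [pseudoDist_nonneg u v]

theorem one_sub_pseudoDist_le_two_mul_exp_neg (hu : ‖u‖ < 1) (hv : ‖v‖ < 1) :
    1 - pseudoDist u v ≤ 2 * exp (-hypDist u v) := by
  have h := exp_hypDist_mul_s18 hu hv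
  rw [exp_neg, ← div_eq_mul_inv, le_div_iff₀ (exp_pos _)]
  linarith [pseudoDist_lt_one hu hv]

theorem norm_sub_le_exp_hypDist_sub_one_mul (hu : ‖u‖ < 1) (hv : ‖v‖ < 1) :
    ‖u - v‖ ≤ (exp (hypDist u v) - 1) / 2 * (1 - ‖u‖ ^ 2) := by
  have hρ := pseudoDist_lt_one hu hv
  have hexp := exp_hypDist_mul_s18 hu hv
  have hD : ‖1 - conj v * u‖ ≤ (1 - ‖u‖ ^ 2) + ‖u - v‖ := by
    have hsplit : 1 - conj v * u = (1 - conj u * u) + conj (u - v) * u := by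
      rw [map_sub]; ring
    have hdiag : ‖1 - conj u * u‖ = 1 - ‖u‖ ^ 2 := by
      rw [Complex.conj_mul', ← Complex.ofReal_pow, ← Complex.ofReal_one, ← Complex.ofReal_sub,
        Complex.norm_real, Real.norm_of_nonneg (by nlinarith [norm_nonneg u])]
    calc ‖1 - conj v * u‖ ≤ ‖1 - conj u * u‖ + ‖conj (u - v) * u‖ := by
          rw [hsplit]; exact norm_add_le _ _
      _ ≤ (1 - ‖u‖ ^ 2) + ‖u - v‖ := by
          rw [hdiag, norm_mul, Complex.norm_conj]
          gcongr
          exact mul_le_of_le_one_right (norm_nonneg _) hu.le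
  have hratio : pseudoDist u v / (1 - pseudoDist u v) = (exp (hypDist u v) - 1) / 2 := by
    rw [div_eq_div_iff (by linarith) two_ne_zero]; linarith
  rw [← hratio, div_mul_eq_mul_div, le_div_iff₀ (by linarith)]
  nlinarith [norm_sub_eq_pseudoDist_mul hu hv, mul_le_mul_of_nonneg_left hD (pseudoDist_nonneg u v)]

end PseudoDist

theorem dist_le_of_dist_add_one_le {E : Type*} [PseudoMetricSpace E] {g : ℝ → E} {z : E}
    {C s : ℝ} (hg : Filter.Tendsto g Filter.atTop (nhds z))
    (hstep : ∀ x, s ≤ x → dist (g x) (g (x + 1)) ≤ C * exp (-x)) :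
    dist (g s) z ≤ C / (1 - exp (-1)) * exp (-s) := by
  have hr : exp (-1) < 1 := Real.exp_lt_one_iff.2 (by norm_num)
  have hstep' :
      ∀ n : ℕ, dist (g (s + n)) (g (s + ↑(n + 1))) ≤ C * exp (-s) * exp (-1) ^ n := by
    intro n
    rw [Nat.cast_succ, ← add_assoc, ← exp_nat_mul, mul_assoc, ← exp_add]
    convert hstep (s + n) (by simp) using 3
    ring
  have hsum := (summable_geometric_of_lt_one (exp_nonneg _) hr).mul_left (C * exp (-s))
  have hlim : Filter.Tendsto (fun n : ℕ => g (s + n)) Filter.atTop (nhds z) :=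
    hg.comp (Filter.tendsto_atTop_add_const_left _ s tendsto_natCast_atTop_atTop)
  have := dist_le_tsum_of_dist_le_of_tendsto₀ _ hstep' hsum hlim
  rw [tsum_mul_left, tsum_geometric_of_lt_one (exp_nonneg _) hr] at this
  simpa [div_eq_mul_inv, mul_right_comm] using this

structure IsGeodesicRay (f : ℝ → ℂ) : Prop where
  norm_lt_one : ∀ s, 0 ≤ s → ‖f s‖ < 1
  hypDist_eq : ∀ s t, 0 ≤ s → 0 ≤ t → hypDist (f s) (f t) = |s - t|

namespace IsGeodesicRay

variable {f : ℝ → ℂ} {s : ℝ}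

theorem hypDist_zero (hf : IsGeodesicRay f) (hs : 0 ≤ s) : hypDist (f s) (f 0) = s := by
  rw [hf.hypDist_eq s 0 hs le_rfl, sub_zero, abs_of_nonneg hs]

theorem one_sub_norm_sq_le (hf : IsGeodesicRay f) (hs : 0 ≤ s) :
    1 - ‖f s‖ ^ 2 ≤ 16 / (1 - ‖f 0‖ ^ 2) * exp (-s) := by
  have hu := hf.norm_lt_one s hs
  have hv := hf.norm_lt_one 0 le_rfl
  have hρ0 := pseudoDist_nonneg (f s) (f 0)
  have hρ1 := pseudoDist_lt_one hu hv
  have hρs := one_sub_pseudoDist_le_two_mul_exp_neg hu hv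
  have hD := norm_one_sub_conj_mul_le_two hu.le hv.le
  have hid := norm_one_sub_conj_mul_sq_mul hu hv
  rw [hf.hypDist_zero hs] at hρs
  have hv2 : 0 < 1 - ‖f 0‖ ^ 2 := by nlinarith [norm_nonneg (f 0)]
  rw [div_mul_eq_mul_div, le_div_iff₀ hv2, ← hid]
  have h1 : (1 - pseudoDist (f s) (f 0)) * (1 + pseudoDist (f s) (f 0)) ≤ 2 * exp (-s) * 2 :=
    mul_le_mul hρs (by linarith) (by linarith) (by positivity)
  have h2 : ‖1 - conj (f 0) * f s‖ ^ 2 ≤ 4 := by nlinarith [norm_nonneg (1 - conj (f 0) * f s)]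
  nlinarith [mul_le_mul h2 h1 (by nlinarith) (by norm_num)]

theorem le_one_sub_norm (hf : IsGeodesicRay f) (hs : 0 ≤ s) :
    (1 - ‖f 0‖) / 4 * exp (-s) ≤ 1 - ‖f s‖ := by
  have hu := hf.norm_lt_one s hs
  have hv := hf.norm_lt_one 0 le_rfl
  have hρ0 := pseudoDist_nonneg (f s) (f 0)
  have hρs := exp_neg_hypDist_le_one_sub_pseudoDist hu hv
  have hD := one_sub_norm_le_norm_one_sub_conj_mul (v := f 0) hu.le
  have hid := norm_one_sub_conj_mul_sq_mul hu hv
  rw [hf.hypDist_zero hs] at hρs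
  have hv1 : 0 < 1 - ‖f 0‖ := by linarith
  have h1 : (1 - ‖f 0‖) ^ 2 * exp (-s) ≤ (1 - ‖f s‖ ^ 2) * (1 - ‖f 0‖ ^ 2) := by
    rw [← hid]
    exact mul_le_mul (pow_le_pow_left₀ hv1.le hD 2)
      (by nlinarith [pseudoDist_lt_one hu hv]) (exp_nonneg _) (sq_nonneg _)
  have h2 : (1 - ‖f s‖ ^ 2) * (1 - ‖f 0‖ ^ 2) ≤ 4 * (1 - ‖f s‖) * (1 - ‖f 0‖) := by
    have h4 : (1 + ‖f s‖) * (1 + ‖f 0‖) ≤ 4 := by nlinarith [norm_nonneg (f s), norm_nonneg (f 0)]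
    nlinarith [mul_le_mul_of_nonneg_left h4 (mul_nonneg (sub_nonneg.2 hu.le) hv1.le)]
  rw [div_mul_eq_mul_div, div_le_iff₀ (by norm_num : (0 : ℝ) < 4)]
  nlinarith

theorem dist_add_one_le (hf : IsGeodesicRay f) (hs : 0 ≤ s) :
    dist (f s) (f (s + 1)) ≤ (exp 1 - 1) / 2 * (16 / (1 - ‖f 0‖ ^ 2)) * exp (-s) := by
  have hs1 : 0 ≤ s + 1 := by linarith
  have h := norm_sub_le_exp_hypDist_sub_one_mul (hf.norm_lt_one s hs) (hf.norm_lt_one _ hs1)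
  rw [hf.hypDist_eq s (s + 1) hs hs1, show s - (s + 1) = -1 by ring, abs_neg, abs_one] at h
  rw [dist_eq_norm, mul_assoc]
  exact h.trans (mul_le_mul_of_nonneg_left (hf.one_sub_norm_sq_le hs)
    (by linarith [add_one_le_exp (1 : ℝ)]))

theorem norm_sub_le_of_tendsto (hf : IsGeodesicRay f) {z : ℂ}
    (hlim : Filter.Tendsto f Filter.atTop (nhds z)) (hs : 0 ≤ s) :
    ‖z - f s‖ ≤ (exp 1 - 1) / 2 * (16 / (1 - ‖f 0‖ ^ 2)) / (1 - exp (-1)) * exp (-s) := by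
  rw [← dist_eq_norm, dist_comm]
  exact dist_le_of_dist_add_one_le hlim fun x hx => hf.dist_add_one_le (hs.trans hx)

theorem continuousOn (hf : IsGeodesicRay f) : ContinuousOn f (Ici 0) := by
  intro x hx
  rw [ContinuousWithinAt, tendsto_iff_dist_tendsto_zero]
  have hbound : ∀ y ∈ Ici (0 : ℝ), dist (f y) (f x) ≤ (exp |y - x| - 1) / 2 := by
    intro y hy
    have h := norm_sub_le_exp_hypDist_sub_one_mul (hf.norm_lt_one y hy) (hf.norm_lt_one x hx)
    rw [hf.hypDist_eq y x hy hx] at h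
    rw [dist_eq_norm]
    refine h.trans (mul_le_of_le_one_right ?_ (by linarith [sq_nonneg ‖f y‖]))
    linarith [one_le_exp (abs_nonneg (y - x))]
  have hcont : ContinuousWithinAt (fun y => (exp |y - x| - 1) / 2) (Ici 0) x := by fun_prop
  refine squeeze_zero' (Filter.Eventually.of_forall fun _ => dist_nonneg)
    (eventually_nhdsWithin_of_forall hbound) ?_
  simpa [ContinuousWithinAt] using hcont

theorem isUnitArcD_image (hf : IsGeodesicRay f) (hs : 0 ≤ s) :
    IsUnitArcD (f '' Icc s (s + 1)) := by
  refine ⟨fun t => f (s + t), fun t ht => hf.norm_lt_one _ (by linarith [ht.1]),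
    fun t ht t' ht' => ?_, ?_⟩
  · rw [hf.hypDist_eq _ _ (by linarith [ht.1]) (by linarith [ht'.1])]
    ring_nf
  · rw [← Function.comp_def f (s + ·), image_comp, image_const_add_Icc, add_zero]

end IsGeodesicRay

section Geodesic

variable {a b w : ℂ}

theorem geoDisk_complex_eq (ha : ‖a‖ = 1) (hb : ‖b‖ = 1) (hab : a ≠ b)
    (hw : w ∈ geoDisk a b) :
    2 * w + 2 * a * b * conj w = (a + b) * (w * conj w + 1) := by
  have haa : conj a * a = 1 := by rw [Complex.conj_mul', ha]; norm_num
  have hbb : conj b * b = 1 := by rw [Complex.conj_mul', hb]; norm_num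
  have hr : ((conj a * b).im : ℂ) * (w * conj w + 1) + 2 * ((conj b - conj a) * w).im = 0 := by
    rw [Complex.mul_conj']
    exact_mod_cast (by linarith [hw.2] :
      (conj a * b).im * (‖w‖ ^ 2 + 1) + 2 * ((conj b - conj a) * w).im = 0)
  have hEC : (conj a * b - a * conj b) * (w * conj w + 1) +
      2 * ((conj b - conj a) * w - (b - a) * conj w) = 0 := by
    have h1 := Complex.sub_conj (conj a * b)
    have h2 := Complex.sub_conj ((conj b - conj a) * w)
    simp only [map_mul, map_sub, Complex.conj_conj] at h1 h2
    rw [h1, h2]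
    push_cast
    linear_combination (2 * Complex.I) * hr
  have key : (a - b) * (2 * w + 2 * a * b * conj w - (a + b) * (w * conj w + 1)) = 0 := by
    linear_combination (a * b) * hEC + (-(b ^ 2 * (w * conj w + 1)) + 2 * b * w) * haa +
      (-(2 * a * w) + a ^ 2 * (w * conj w + 1)) * hbb
  exact sub_eq_zero.1 ((mul_eq_zero.1 key).resolve_left (sub_ne_zero.2 hab))

theorem two_mul_norm_sub_mul_norm_sub_of_mem_geoDisk (ha : ‖a‖ = 1) (hb : ‖b‖ = 1)
    (hab : a ≠ b) (hw : w ∈ geoDisk a b) :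
    2 * (‖w - a‖ * ‖w - b‖) = (1 - ‖w‖ ^ 2) * ‖a - b‖ := by
  have haa : conj a * a = 1 := by rw [Complex.conj_mul', ha]; norm_num
  have hbb : conj b * b = 1 := by rw [Complex.conj_mul', hb]; norm_num
  have hab0 : a * b ≠ 0 := mul_ne_zero (norm_ne_zero_iff.1 (by rw [ha]; norm_num))
    (norm_ne_zero_iff.1 (by rw [hb]; norm_num))
  have hQ := geoDisk_complex_eq ha hb hab hw
  have hnorm : ∀ x : ℂ, ((‖x‖ : ℂ)) ^ 2 = x * conj x := fun x => (Complex.mul_conj' x).symm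
  have hsq : ((4 * (‖w - a‖ * ‖w - b‖) ^ 2 : ℝ) : ℂ) =
      (((1 - ‖w‖ ^ 2) * ‖a - b‖) ^ 2 : ℝ) := by
    push_cast
    simp only [mul_pow, hnorm, map_sub]
    apply mul_left_cancel₀ hab0
    linear_combination (2 * w + 2 * a * b * conj w - (a + b) * (w * conj w + 1)) * hQ
      + (-(4 * (w - a) * (w - b) * (b * conj w - 1)) + 4 * (w - a) * (w - b) * (conj b * b - 1)
        - (1 - w * conj w) ^ 2 * (a - b) * b) * haa
      + (-(4 * (w - a) * (w - b) * (a * conj w - 1)) + (1 - w * conj w) ^ 2 * (a - b) * a) * hbb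
  have hw1 : 0 ≤ 1 - ‖w‖ ^ 2 := by nlinarith [hw.1, norm_nonneg w]
  have := Complex.ofReal_injective hsq
  nlinarith [sq_nonneg (2 * (‖w - a‖ * ‖w - b‖) - (1 - ‖w‖ ^ 2) * ‖a - b‖),
    mul_nonneg (norm_nonneg (w - a)) (norm_nonneg (w - b)), mul_nonneg hw1 (norm_nonneg (a - b))]

end Geodesic

theorem add_mul_add_div_le {X P Q R m : ℝ} (hX : 0 ≤ X) (hm : m < 1) (hP : 1 - m ≤ P)
    (hQ : 1 - m ≤ Q) (hR : 0 < R) (hPQR : 2 * (P * Q) = (1 - m ^ 2) * R) :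
    (X + P) * (X + Q) / R ≤ X ^ 2 / (1 - m) + 2 * X + (1 - m ^ 2) := by
  have h1m : 0 < 1 - m := by linarith
  have hRl : 1 - m ≤ R := by nlinarith [mul_le_mul hP hQ h1m.le (h1m.le.trans hP)]
  have hPR : P ≤ R := by
    nlinarith [mul_le_mul_of_nonneg_left hQ (h1m.le.trans hP), mul_pos hR (mul_pos h1m h1m)]
  have hQR : Q ≤ R := by
    nlinarith [mul_le_mul_of_nonneg_left hP (h1m.le.trans hQ), mul_pos hR (mul_pos h1m h1m)]
  have key : (X + P) * (X + Q) * (1 - m) ≤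
      (X ^ 2 + 2 * X * (1 - m) + (1 - m ^ 2) * (1 - m)) * R := by
    nlinarith [mul_nonpos_of_nonneg_of_nonpos (sq_nonneg X) (by linarith : 1 - m - R ≤ 0),
      mul_nonpos_of_nonneg_of_nonpos (mul_nonneg hX h1m.le) (by linarith : P + Q - 2 * R ≤ 0),
      mul_nonneg (mul_nonneg (h1m.le.trans hP) (h1m.le.trans hQ)) h1m.le]
  calc (X + P) * (X + Q) / R ≤ (X ^ 2 + 2 * X * (1 - m) + (1 - m ^ 2) * (1 - m)) / (1 - m) := by
        rw [div_le_div_iff₀ hR h1m]; linarith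
    _ = X ^ 2 / (1 - m) + 2 * X + (1 - m ^ 2) := by field_simp

theorem eAbs_le_of_mem_geoDisk (z : ℂ) {g : GeodD} {w : ℂ} (hw : w ∈ geoDisk g.1.1 g.1.2) :
    eAbs z g ≤ ‖z - w‖ ^ 2 / (1 - ‖w‖) + 2 * ‖z - w‖ + (1 - ‖w‖ ^ 2) := by
  obtain ⟨⟨a, b⟩, ha, hb⟩ := g
  have hw1 : ‖w‖ < 1 := hw.1
  by_cases hab : a = b
  -- a degenerate `g` crosses everything (`geoDisk a a` is the whole disk), but `eAbs z g = 0`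
  · have : 0 ≤ ‖z - w‖ ^ 2 / (1 - ‖w‖) := div_nonneg (sq_nonneg _) (by linarith)
    simp only [eAbs, hab, sub_self, div_zero, norm_zero]
    nlinarith [norm_nonneg (z - w), norm_nonneg w]
  have hnorm_sub_le : ∀ c : ℂ, ‖c‖ = 1 → 1 - ‖w‖ ≤ ‖w - c‖ := fun c hc => by
    simpa [hc, norm_sub_rev] using norm_sub_norm_le c w
  calc eAbs z ⟨(a, b), ha, hb⟩ = ‖z - a‖ * ‖z - b‖ / ‖a - b‖ := by
        simp only [eAbs, norm_div, norm_mul]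
    _ ≤ (‖z - w‖ + ‖w - a‖) * (‖z - w‖ + ‖w - b‖) / ‖a - b‖ := by
        gcongr <;> exact norm_sub_le_norm_sub_add_norm_sub _ _ _
    _ ≤ _ := add_mul_add_div_le (norm_nonneg _) hw1 (hnorm_sub_le a ha) (hnorm_sub_le b hb)
        (norm_pos_iff.2 (sub_ne_zero.2 hab))
        (two_mul_norm_sub_mul_norm_sub_of_mem_geoDisk ha hb hab hw)

theorem crossD_iUnion {ι : Sort*} (A : ι → Set ℂ) : crossD (⋃ i, A i) = ⋃ i, crossD (A i) := by
  ext g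
  simp only [crossD, mem_ofPred_eq, mem_iUnion, inter_iUnion, nonempty_iUnion]

theorem measurableSet_crossD {A : Set ℂ} (hA : IsCompact A) (hA1 : ∀ w ∈ A, ‖w‖ < 1) :
    MeasurableSet (crossD A) := by
  let Φ : (ℂ × ℂ) × ℂ → ℝ := fun q =>
    (conj q.1.1 * q.1.2).im * (‖q.2‖ ^ 2 + 1) + 2 * ((conj q.1.2 - conj q.1.1) * q.2).im
  have hΦ : Continuous Φ := by fun_prop
  let K : Set ((ℂ × ℂ) × ℂ) :=
    (Metric.sphere 0 1 ×ˢ Metric.sphere 0 1) ×ˢ A ∩ Φ ⁻¹' {0}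
  have hK : IsCompact K :=
    (((isCompact_sphere 0 1).prod (isCompact_sphere 0 1)).prod hA).inter_right
      (isClosed_singleton.preimage hΦ)
  have heq : crossD A = Subtype.val ⁻¹' (Prod.fst '' K) := by
    ext ⟨p, hp⟩
    constructor
    · rintro ⟨w, hwg, hwA⟩
      refine ⟨(p, w), ⟨⟨⟨?_, ?_⟩, hwA⟩, ?_⟩, rfl⟩
      · simpa using hp.1
      · simpa using hp.2
      · simp only [Φ, mem_preimage, mem_singleton_iff]
        linarith [hwg.2]
    · rintro ⟨⟨p', w⟩, ⟨⟨-, hwA⟩, hΦ0⟩, rfl⟩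
      simp only [Φ, mem_preimage, mem_singleton_iff] at hΦ0
      exact ⟨w, ⟨hA1 w hwA, by linarith⟩, hwA⟩
  rw [heq]
  exact measurable_subtype_coe (hK.image continuous_fst).isClosed.measurableSet

theorem Ici_zero_eq_iUnion_Icc_natCast :
    Ici (0 : ℝ) = ⋃ n : ℕ, Icc (n : ℝ) (n + 1) := by
  ext x
  simp only [mem_Ici, mem_iUnion, mem_Icc]
  constructor
  · intro hx
    exact ⟨⌊x⌋₊, Nat.floor_le hx, (Nat.lt_floor_add_one x).le⟩
  · rintro ⟨n, hn, -⟩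
    exact (Nat.cast_nonneg n).trans hn

theorem IsBoundedLamD.exists_measure_crossD_le {μ : Measure GeodD} (hμ : IsBoundedLamD μ) :
    ∃ B : ENNReal, B ≠ ⊤ ∧ ∀ A, IsUnitArcD A → μ (crossD A) ≤ B := by
  obtain ⟨-, ⟨B, hB⟩, hfin⟩ := hμ
  refine ⟨ENNReal.ofReal B, ENNReal.ofReal_ne_top, fun A hA => ?_⟩
  rw [← ENNReal.ofReal_toReal (hfin A hA)]
  exact ENNReal.ofReal_le_ofReal (hB ⟨A, hA, rfl⟩)

theorem setLIntegral_iUnion_lt_top_of_le_geometric {α : Type*} [MeasurableSpace α]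
    {μ : Measure α} {s : ℕ → Set α} {g : α → ENNReal} {B C r : ENNReal}
    (hs : ∀ n, MeasurableSet (s n)) (hμ : ∀ n, μ (s n) ≤ B)
    (hg : ∀ n, ∀ x ∈ s n, g x ≤ C * r ^ n) (hB : B ≠ ⊤) (hC : C ≠ ⊤) (hr : r < 1) :
    ∫⁻ x in ⋃ n, s n, g x ∂μ < ⊤ :=
  calc ∫⁻ x in ⋃ n, s n, g x ∂μ ≤ ∑' n, ∫⁻ x in s n, g x ∂μ := lintegral_iUnion_le _ _
    _ ≤ ∑' n, C * r ^ n * B := ENNReal.tsum_le_tsum fun n =>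
        (setLIntegral_mono' (hs n) (hg n)).trans (by rw [setLIntegral_const]; gcongr; exact hμ n)
    _ = C * B * (1 - r)⁻¹ := by
        rw [ENNReal.tsum_mul_right, ENNReal.tsum_mul_left, ENNReal.tsum_geometric]; ring
    _ < ⊤ := ENNReal.mul_lt_top (ENNReal.mul_lt_top hC.lt_top hB.lt_top)
        (ENNReal.inv_lt_top.2 (tsub_pos_of_lt hr))

theorem IsGeodesicRay.exists_eAbs_le {f : ℝ → ℂ} {z : ℂ} (hf : IsGeodesicRay f)
    (hlim : Filter.Tendsto f Filter.atTop (nhds z)) :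
    ∃ K, 0 ≤ K ∧
      ∀ a, 0 ≤ a → ∀ g ∈ crossD (f '' Icc a (a + 1)), eAbs z g ≤ K * exp (-a) := by
  obtain ⟨Cz, hX⟩ : ∃ Cz, ∀ s, 0 ≤ s → ‖z - f s‖ ≤ Cz * exp (-s) :=
    ⟨_, fun s hs => hf.norm_sub_le_of_tendsto hlim hs⟩
  obtain ⟨Cu, hup⟩ : ∃ Cu, ∀ s, 0 ≤ s → 1 - ‖f s‖ ^ 2 ≤ Cu * exp (-s) :=
    ⟨_, fun s hs => hf.one_sub_norm_sq_le hs⟩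
  obtain ⟨c, hc, hlow⟩ : ∃ c, 0 < c ∧ ∀ s, 0 ≤ s → c * exp (-s) ≤ 1 - ‖f s‖ :=
    ⟨_, by linarith [hf.norm_lt_one 0 le_rfl], fun s hs => hf.le_one_sub_norm hs⟩
  have hCz : 0 ≤ Cz := by simpa using (norm_nonneg _).trans (hX 0 le_rfl)
  have hCu : 0 ≤ Cu := by
    have := hup 0 le_rfl
    simp only [neg_zero, exp_zero, mul_one] at this
    nlinarith [norm_nonneg (f 0), hf.norm_lt_one 0 le_rfl]
  refine ⟨Cz ^ 2 / c + 2 * Cz + Cu, by positivity, fun a ha g ⟨w, hwg, s, hs, hsw⟩ => ?_⟩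
  subst hsw
  have hs0 : 0 ≤ s := ha.trans hs.1
  have hsq : ‖z - f s‖ ^ 2 / (1 - ‖f s‖) ≤ Cz ^ 2 / c * exp (-s) := by
    calc ‖z - f s‖ ^ 2 / (1 - ‖f s‖) ≤ (Cz * exp (-s)) ^ 2 / (c * exp (-s)) :=
          div_le_div₀ (by positivity) (pow_le_pow_left₀ (norm_nonneg _) (hX s hs0) 2)
            (by positivity) (hlow s hs0)
      _ = Cz ^ 2 / c * exp (-s) := by field_simp
  calc eAbs z g ≤ ‖z - f s‖ ^ 2 / (1 - ‖f s‖) + 2 * ‖z - f s‖ + (1 - ‖f s‖ ^ 2) :=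
        eAbs_le_of_mem_geoDisk z hwg
    _ ≤ (Cz ^ 2 / c + 2 * Cz + Cu) * exp (-s) := by
        nlinarith [hup s hs0, hX s hs0]
    _ ≤ (Cz ^ 2 / c + 2 * Cz + Cu) * exp (-a) := by
        gcongr
        exact hs.1

theorem eTilde_integrable_general (μ : Measure GeodD) (hbdd : IsBoundedLamD μ)
    (z : ℂ) (f : ℝ → ℂ)
    (hin : ∀ s, 0 ≤ s → ‖f s‖ < 1)
    (hiso : ∀ s t, 0 ≤ s → 0 ≤ t → hypDist (f s) (f t) = |s - t|)
    (hlim : Filter.Tendsto f Filter.atTop (nhds z)) :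
    (∫⁻ g, ENNReal.ofReal (eAbs z g) ∂(μ.restrict (crossD (f '' Ici 0)))) < ⊤ := by
  have hf : IsGeodesicRay f := ⟨hin, hiso⟩
  obtain ⟨B, hB, hμB⟩ := hbdd.exists_measure_crossD_le
  obtain ⟨K, hK, hKg⟩ := hf.exists_eAbs_le hlim
  rw [Ici_zero_eq_iUnion_Icc_natCast, image_iUnion, crossD_iUnion]
  refine setLIntegral_iUnion_lt_top_of_le_geometric (C := ENNReal.ofReal K)
    (r := ENNReal.ofReal (exp (-1))) (fun n => ?_)
    (fun n => hμB _ (hf.isUnitArcD_image n.cast_nonneg)) (fun n g hg => ?_) hB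
    ENNReal.ofReal_ne_top ?_
  · refine measurableSet_crossD (isCompact_Icc.image_of_continuousOn
      (hf.continuousOn.mono fun x hx => n.cast_nonneg.trans hx.1)) ?_
    rintro _ ⟨s, hs, rfl⟩
    exact hin s (n.cast_nonneg.trans hs.1)
  · rw [← ENNReal.ofReal_pow (exp_nonneg _), ← ENNReal.ofReal_mul hK, ← exp_nat_mul,
      mul_neg_one]
    exact ENNReal.ofReal_le_ofReal (hKg n n.cast_nonneg g hg)
  · rw [ENNReal.ofReal_lt_one]
    exact Real.exp_lt_one_iff.2 (by norm_num)

/-- For a bounded measured lamination `λ` and a point `z ∈ S¹` not in the closure of the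
base stratum `A` (so that there is a geodesic ray `f` from a point `z₀` of `A` to `z`),
the integral `∫ ẽ_z dλ_{A,z}` converges absolutely, where `λ_{A,z}` is the restriction of
`λ` to the geodesics separating `A` from `z` (the geodesics crossing the ray).  In
particular the infinitesimal earthquake `Ė^λ(z)` is well-defined. -/
theorem eTilde_integrable (μ : Measure GeodD)
    (hlam : IsLamD μ) (hbdd : IsBoundedLamD μ)
    (z : ℂ) (hz : ‖z‖ = 1) (f : ℝ → ℂ)
    (hin : ∀ s, 0 ≤ s → ‖f s‖ < 1)
    (hiso : ∀ s t, 0 ≤ s → 0 ≤ t → hypDist (f s) (f t) = |s - t|)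
    (hlim : Filter.Tendsto f Filter.atTop (nhds z)) :
    (∫⁻ g, ENNReal.ofReal (eAbs z g) ∂(μ.restrict (crossD (f '' Ici 0)))) < ⊤ :=
  eTilde_integrable_general μ hbdd z f hin hiso hlim
end
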